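/- Let 1 ≤ p < ∞, λ ≥ 1, let X, Y be complex Banach spaces and T : X → Y a bounded linear operator with ‖T‖ < λ^{1/p}. Suppose r ∈ ℝ_{≥0}^n is such that for every m ≥ 1 and every X-valued m-homogeneous polynomial Q(z) = ∑_{|α|=m} x_α z^α on B_{ℓ_q^n}, one has ∑_{|α|=m} ‖T(x_α)‖^p r^{pα} ≤ λ sup_{z ∈ B_{ℓ_q^n}} ‖Q(z)‖^p. Set c = ((λ - ‖T‖^p)/(2λ - ‖T‖^p))^{1/p}. Then for every bounded holomorphic f : B_{ℓ_q^n} → X with monomial coefficients x_α, one has ∑_{α ∈ ℕ_0^n} ‖T(x_α)‖^p (c r)^{pα} ≤ λ sup_{z ∈ B_{ℓ_q^n}} ‖f(z)‖^p. -/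

import Mathlib

/-!
On the complex line through a point `z` of the ball, `w ↦ f(w z) = ∑ₖ wᵏ Pₖ(z)` is a power
series converging a little beyond the closed unit disc, so its coefficients are absolutely
summable; averaging `w^(-k) f(w z)` over the `N`-th roots of unity and letting `N → ∞` gives the
Cauchy estimate `‖Pₖ(z)‖ ≤ ‖f‖_∞`. Hence `‖T x₀‖ᵖ ≤ ‖T‖ᵖ ‖f‖ᵖ`, the hypothesis bounds the
degree-`k` block by `λ ‖f‖ᵖ` for `k ≥ 1`, and weighting degree `k` by `dᵏ`,
`d = (λ - ‖T‖ᵖ)/(2λ - ‖T‖ᵖ)`, sums these bounds to `(‖T‖ᵖ + λ ∑_{k ≥ 1} dᵏ) ‖f‖ᵖ = λ ‖f‖ᵖ`.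
-/

noncomputable section

/-- The open unit ball of `ℓ_q^n` (complex `n`-space with the `q`-norm), `1 ≤ q < ∞`. -/
def ballq (q : ℝ) (n : ℕ) : Set (Fin n → ℂ) :=
  {z | (∑ j, ‖z j‖ ^ q) ^ (1 / q) < 1}

/-- The monomial `z^α`. -/
def mono {n : ℕ} (z : Fin n → ℂ) (α : Fin n → ℕ) : ℂ := ∏ j, z j ^ α j

/-- The coefficient family `a : α ↦ x_α` represents a bounded holomorphic function
`f(z) = ∑_α x_α z^α` on `B_{ℓ_q^n}` with values in `X`. -/
def IsHinf {X : Type*} [NormedAddCommGroup X] [NormedSpace ℂ X]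
    (q : ℝ) (n : ℕ) (a : (Fin n → ℕ) → X) : Prop :=
  (∀ z ∈ ballq q n, Summable fun α => mono z α • a α) ∧
    ∃ M : ℝ, ∀ z ∈ ballq q n, ‖∑' α, mono z α • a α‖ ≤ M

/-- The sup norm `‖f‖_{B_{ℓ_q^n}}` of the function represented by `a`. -/
def supnorm {X : Type*} [NormedAddCommGroup X] [NormedSpace ℂ X]
    (q : ℝ) (n : ℕ) (a : (Fin n → ℕ) → X) : ℝ :=
  sSup {y | ∃ z ∈ ballq q n, y = ‖∑' α, mono z α • a α‖}

open Finset Filter Topology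

theorem IsPrimitiveRoot.sum_range_pow_pow {R : Type*} [CommRing R] [IsDomain R] {ζ : R} {N : ℕ}
    (hζ : IsPrimitiveRoot ζ N) (k : ℕ) :
    ∑ j ∈ range N, (ζ ^ k) ^ j = if N ∣ k then (N : R) else 0 := by
  split_ifs with hk
  · simp [(hζ.pow_eq_one_iff_dvd k).mpr hk]
  · have hne : ζ ^ k - 1 ≠ 0 := sub_ne_zero.mpr fun h => hk ((hζ.pow_eq_one_iff_dvd k).mp h)
    have hroot : (ζ ^ k) ^ N = 1 := by rw [← pow_mul, mul_comm, pow_mul, hζ.pow_eq_one, one_pow]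
    exact (mul_eq_zero.mp (by rw [geom_sum_mul, hroot, sub_self])).resolve_right hne

theorem HasSum.sum_antidiagonalTuple {M : Type*} [AddCommMonoid M] [TopologicalSpace M]
    [ContinuousAdd M] [RegularSpace M] {n : ℕ} {f : (Fin n → ℕ) → M} {s : M} (hf : HasSum f s) :
    HasSum (fun k => ∑ α ∈ Finset.Nat.antidiagonalTuple n k, f α) s := by
  refine ((Equiv.sigmaFiberEquiv fun α : Fin n → ℕ => ∑ i, α i).hasSum_iff.mpr hf).sigma
    fun k => ?_
  let e : {α : Fin n → ℕ // ∑ i, α i = k} ≃ (Finset.Nat.antidiagonalTuple n k : Set (Fin n → ℕ)) :=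
    Equiv.subtypeEquivRight fun α => by simp [Finset.Nat.mem_antidiagonalTuple]
  exact e.hasSum_iff.mpr (Finset.hasSum _ f)

theorem hasSum_of_hasSum_sum_antidiagonalTuple {n : ℕ} {f : (Fin n → ℕ) → ℝ} (hf : 0 ≤ f)
    {s : ℝ} (h : HasSum (fun k => ∑ α ∈ Finset.Nat.antidiagonalTuple n k, f α) s) :
    HasSum f s := by
  have hsummable : Summable f := by
    refine summable_of_sum_le hf (c := s) fun F => ?_
    rw [← sum_fiberwise_of_maps_to (t := F.image fun α => ∑ i, α i)
      fun α hα => mem_image_of_mem _ hα]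
    calc _ ≤ ∑ k ∈ F.image fun α => ∑ i, α i, ∑ α ∈ Finset.Nat.antidiagonalTuple n k, f α := by
          refine sum_le_sum fun k _ => sum_le_sum_of_subset_of_nonneg (fun α hα => ?_)
            fun α _ _ => hf α
          exact Finset.Nat.mem_antidiagonalTuple.mpr (mem_filter.mp hα).2
      _ ≤ s := sum_le_hasSum _ (fun k _ => sum_nonneg fun α _ => hf α) h
  exact (hsummable.hasSum.sum_antidiagonalTuple.unique h) ▸ hsummable.hasSum

theorem summable_norm_of_summable_pow_smul {𝕜 X : Type*} [NormedField 𝕜] [NormedAddCommGroup X]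
    [NormedSpace 𝕜 X] {c : ℕ → X} {w : 𝕜} (hw : 1 < ‖w‖) (h : Summable fun k => w ^ k • c k) :
    Summable fun k => ‖c k‖ := by
  obtain ⟨C, hC⟩ := h.tendsto_cofinite_zero.norm.bddAbove_range_of_cofinite
  refine Summable.of_nonneg_of_le (fun k => norm_nonneg _) (fun k => ?_)
    ((summable_geometric_of_lt_one (inv_nonneg.2 (norm_nonneg w))
      (inv_lt_one_of_one_lt₀ hw)).mul_left C)
  rw [inv_pow, ← div_eq_mul_inv, le_div_iff₀ (pow_pos (by linarith) _), mul_comm, ← norm_pow,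
    ← norm_smul]
  exact hC ⟨k, rfl⟩

section CauchyEstimate

variable {X : Type*} [NormedAddCommGroup X] [NormedSpace ℂ X] {c : ℕ → X} {g : ℂ → X} {S : ℝ}

/-- Averaging `w ^ (N - m) • g w` over the `N`-th roots of unity keeps exactly the coefficients
`c k` with `k ≡ m [MOD N]`; all of them except `c m` lie in the tail beyond `N`. -/
theorem norm_le_add_tsum_norm_nat_add_of_hasSum_pow_smul (hc : Summable fun k => ‖c k‖)
    (hg : ∀ w : ℂ, ‖w‖ = 1 → HasSum (fun k => w ^ k • c k) (g w))
    (hS : ∀ w : ℂ, ‖w‖ = 1 → ‖g w‖ ≤ S) {m N : ℕ} (hmN : m < N) :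
    ‖c m‖ ≤ S + ∑' k, ‖c (k + N)‖ := by
  have hN : N ≠ 0 := by omega
  obtain ⟨ω, hω⟩ : ∃ ω : ℂ, IsPrimitiveRoot ω N := ⟨_, Complex.isPrimitiveRoot_exp N hN⟩
  have hω1 : ∀ j : ℕ, ‖ω ^ j‖ = 1 := by simp [hω.norm'_eq_one hN]
  set avg : X := (N : ℂ)⁻¹ • ∑ j ∈ range N, (ω ^ j) ^ (N - m) • g (ω ^ j)
  have havg_le : ‖avg‖ ≤ S := by
    have hterm : ∀ j ∈ range N, ‖(ω ^ j) ^ (N - m) • g (ω ^ j)‖ ≤ S := fun j _ => by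
      rw [norm_smul, norm_pow, hω1, one_pow, one_mul]
      exact hS _ (hω1 j)
    have hN' : (0 : ℝ) < N := by positivity
    calc ‖avg‖ = (N : ℝ)⁻¹ * ‖∑ j ∈ range N, (ω ^ j) ^ (N - m) • g (ω ^ j)‖ := by
          rw [norm_smul, norm_inv, Complex.norm_natCast]
      _ ≤ (N : ℝ)⁻¹ * (N * S) := by gcongr; simpa using norm_sum_le_of_le _ hterm
      _ = S := by field_simp
  have havg : HasSum (fun k => if N ∣ k + (N - m) then c k else 0) avg := by
    convert ((hasSum_sum fun j _ => (hg (ω ^ j) (hω1 j)).const_smul ((ω ^ j) ^ (N - m))).const_smul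
      (N : ℂ)⁻¹) using 1
    funext k
    have hpow : ∀ j, (ω ^ j) ^ (N - m) * (ω ^ j) ^ k = (ω ^ (k + (N - m))) ^ j := fun j => by ring
    simp only [smul_smul, hpow, ← sum_smul, hω.sum_range_pow_pow]
    split_ifs <;> simp [hN]
  set D : ℕ → X := fun k => (if N ∣ k + (N - m) then c k else 0) - if k = m then c m else 0
  have hD : ∀ k < N, D k = 0 := by
    intro k hk
    by_cases hkm : k = m
    · simp [D, hkm, Nat.add_sub_cancel' hmN.le]
    · have hndvd : ¬ N ∣ k + (N - m) := fun h => hkm (by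
        have := Nat.eq_of_dvd_of_lt_two_mul (by omega) h (by omega)
        omega)
      simp [D, hkm, hndvd]
  have htail : HasSum (fun k => D (k + N)) (avg - c m) := by
    have := (hasSum_nat_add_iff' N).mpr (havg.sub (hasSum_ite_eq m (c m)))
    rwa [sum_eq_zero fun k hk => hD k (mem_range.mp hk), sub_zero] at this
  have htail_le : ‖avg - c m‖ ≤ ∑' k, ‖c (k + N)‖ :=
    htail.norm_le_of_bounded (hc.comp_injective (add_left_injective N)).hasSum fun k => by
      simp only [D, if_neg (show k + N ≠ m by omega), sub_zero]
      split_ifs <;> simp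
  calc ‖c m‖ ≤ ‖avg‖ + ‖avg - c m‖ := norm_le_norm_add_norm_sub _ _
    _ ≤ S + ∑' k, ‖c (k + N)‖ := add_le_add havg_le htail_le

theorem norm_le_of_hasSum_pow_smul (hc : Summable fun k => ‖c k‖)
    (hg : ∀ w : ℂ, ‖w‖ = 1 → HasSum (fun k => w ^ k • c k) (g w))
    (hS : ∀ w : ℂ, ‖w‖ = 1 → ‖g w‖ ≤ S) (m : ℕ) : ‖c m‖ ≤ S := by
  have hlim : Tendsto (fun N => S + ∑' k, ‖c (k + N)‖) atTop (𝓝 (S + 0)) :=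
    tendsto_const_nhds.add (tendsto_sum_nat_add fun k => ‖c k‖)
  rw [add_zero] at hlim
  exact ge_of_tendsto hlim <| (eventually_gt_atTop m).mono fun N hN =>
    norm_le_add_tsum_norm_nat_add_of_hasSum_pow_smul hc hg hS hN

end CauchyEstimate

def lqNorm {n : ℕ} (q : ℝ) (z : Fin n → ℂ) : ℝ := (∑ j, ‖z j‖ ^ q) ^ (1 / q)

section Ball

variable {q : ℝ} {n : ℕ}

theorem mem_ballq_iff {z : Fin n → ℂ} : z ∈ ballq q n ↔ lqNorm q z < 1 := Iff.rfl

theorem lqNorm_nonneg (z : Fin n → ℂ) : 0 ≤ lqNorm q z := by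
  unfold lqNorm
  positivity

theorem lqNorm_smul (hq : 0 < q) (w : ℂ) (z : Fin n → ℂ) :
    lqNorm q (w • z) = ‖w‖ * lqNorm q z := by
  simp only [lqNorm, Pi.smul_apply, smul_eq_mul, norm_mul,
    Real.mul_rpow (norm_nonneg w) (norm_nonneg _), ← mul_sum]
  rw [Real.mul_rpow (by positivity) (by positivity), ← Real.rpow_mul (norm_nonneg w),
    mul_one_div_cancel hq.ne', Real.rpow_one]

theorem zero_mem_ballq (hq : 0 < q) : (0 : Fin n → ℂ) ∈ ballq q n := by
  rw [mem_ballq_iff, ← zero_smul ℂ (0 : Fin n → ℂ), lqNorm_smul hq, norm_zero, zero_mul]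
  exact one_pos

theorem exists_one_lt_forall_smul_mem_ballq (hq : 0 < q) {z : Fin n → ℂ} (hz : z ∈ ballq q n) :
    ∃ R : ℝ, 1 < R ∧ ∀ w : ℂ, ‖w‖ ≤ R → w • z ∈ ballq q n := by
  rw [mem_ballq_iff] at hz
  have hν := lqNorm_nonneg (q := q) z
  refine ⟨2 / (1 + lqNorm q z), by rw [lt_div_iff₀ (by positivity)]; linarith, fun w hw => ?_⟩
  rw [mem_ballq_iff, lqNorm_smul hq]
  calc ‖w‖ * lqNorm q z ≤ 2 / (1 + lqNorm q z) * lqNorm q z := by gcongr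
    _ < 1 := by rw [div_mul_eq_mul_div, div_lt_one (by positivity)]; linarith

end Ball

theorem mono_smul {n : ℕ} (w : ℂ) (z : Fin n → ℂ) (α : Fin n → ℕ) :
    mono (w • z) α = w ^ (∑ j, α j) * mono z α := by
  simp only [mono, Pi.smul_apply, smul_eq_mul, mul_pow, prod_mul_distrib, prod_pow_eq_pow_sum]

def homogeneousPart {X : Type*} [Zero X] {n : ℕ} (m : ℕ) (a : (Fin n → ℕ) → X) :
    (Fin n → ℕ) → X :=
  fun α => if ∑ j, α j = m then a α else 0

theorem tsum_homogeneousPart_eq {M X : Type*} [AddCommMonoid M] [TopologicalSpace M] [Zero X]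
    {n : ℕ} (u : (Fin n → ℕ) → X → M) (hu : ∀ α, u α 0 = 0) (a : (Fin n → ℕ) → X) (m : ℕ) :
    ∑' α, u α (homogeneousPart m a α) = ∑ α ∈ Finset.Nat.antidiagonalTuple n m, u α (a α) := by
  rw [tsum_eq_sum (s := Finset.Nat.antidiagonalTuple n m) fun α hα => by
    simp [homogeneousPart, Finset.Nat.mem_antidiagonalTuple.not.mp hα, hu]]
  exact sum_congr rfl fun α hα => by simp [homogeneousPart, Finset.Nat.mem_antidiagonalTuple.mp hα]

section SupNorm

variable {X : Type*} [NormedAddCommGroup X] [NormedSpace ℂ X] {q : ℝ} {n : ℕ}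
  {a : (Fin n → ℕ) → X}

theorem supnorm_nonneg (a : (Fin n → ℕ) → X) : 0 ≤ supnorm q n a :=
  Real.sSup_nonneg fun _ ⟨_, _, hy⟩ => hy ▸ norm_nonneg _

theorem norm_tsum_le_supnorm (ha : IsHinf q n a) {z : Fin n → ℂ} (hz : z ∈ ballq q n) :
    ‖∑' α, mono z α • a α‖ ≤ supnorm q n a := by
  obtain ⟨M, hM⟩ := ha.2
  exact le_csSup ⟨M, fun _ ⟨z, hz, hy⟩ => hy ▸ hM z hz⟩ ⟨z, hz, rfl⟩

theorem norm_sum_antidiagonalTuple_le_supnorm (hq : 0 < q) (ha : IsHinf q n a)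
    {z : Fin n → ℂ} (hz : z ∈ ballq q n) (m : ℕ) :
    ‖∑ α ∈ Finset.Nat.antidiagonalTuple n m, mono z α • a α‖ ≤ supnorm q n a := by
  obtain ⟨R, hR, hRz⟩ := exists_one_lt_forall_smul_mem_ballq hq hz
  have hline : ∀ w : ℂ, ‖w‖ ≤ R → HasSum
      (fun k => w ^ k • ∑ α ∈ Finset.Nat.antidiagonalTuple n k, mono z α • a α)
      (∑' α, mono (w • z) α • a α) := by
    intro w hw
    convert (ha.1 _ (hRz w hw)).hasSum.sum_antidiagonalTuple using 2 with k
    rw [smul_sum]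
    refine sum_congr rfl fun α hα => ?_
    rw [mono_smul, mul_smul, Finset.Nat.mem_antidiagonalTuple.mp hα]
  have hR' : ‖(R : ℂ)‖ = R := by simp [abs_of_pos (one_pos.trans hR)]
  refine norm_le_of_hasSum_pow_smul ?_ (fun w hw => hline w (by linarith))
    (fun w hw => norm_tsum_le_supnorm ha (hRz w (by linarith))) m
  exact summable_norm_of_summable_pow_smul (hR'.symm ▸ hR) (hline R hR'.le).summable

theorem norm_apply_zero_le_supnorm (hq : 0 < q) (ha : IsHinf q n a) :
    ‖a 0‖ ≤ supnorm q n a := by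
  simpa [mono, Finset.Nat.antidiagonalTuple_zero_right] using
    norm_sum_antidiagonalTuple_le_supnorm hq ha (zero_mem_ballq hq) 0

theorem supnorm_homogeneousPart_le (hq : 0 < q) (ha : IsHinf q n a) (m : ℕ) :
    supnorm q n (homogeneousPart m a) ≤ supnorm q n a := by
  refine Real.sSup_le ?_ (supnorm_nonneg a)
  rintro _ ⟨z, hz, rfl⟩
  rw [tsum_homogeneousPart_eq (fun α x => mono z α • x) (fun α => smul_zero _)]
  exact norm_sum_antidiagonalTuple_le_supnorm hq ha hz m

end SupNorm

theorem add_mul_tsum_geometric_succ {E lam : ℝ} (hE : 0 ≤ E) (hElam : E < lam) :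
    E + lam * ∑' k : ℕ, ((lam - E) / (2 * lam - E)) ^ (k + 1) = lam := by
  have hden : 0 < 2 * lam - E := by linarith
  have hd0 : 0 ≤ (lam - E) / (2 * lam - E) := div_nonneg (by linarith) hden.le
  have hd1 : (lam - E) / (2 * lam - E) < 1 := by rw [div_lt_one hden]; linarith
  have hlam : lam ≠ 0 := by linarith
  have h1d : 1 - (lam - E) / (2 * lam - E) = lam / (2 * lam - E) := by
    rw [eq_div_iff hden.ne', sub_mul, div_mul_cancel₀ _ hden.ne']
    ring
  simp_rw [pow_succ']
  rw [tsum_mul_left, tsum_geometric_of_lt_one hd0 hd1, h1d, inv_div, div_mul_div_cancel₀ hden.ne',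
    mul_div_cancel₀ _ hlam]
  ring

theorem tsum_pow_mul_le_of_sum_antidiagonalTuple_le {n : ℕ} {t : (Fin n → ℕ) → ℝ} (ht : 0 ≤ t)
    {E lam B : ℝ} (hE : 0 ≤ E) (hElam : E < lam) (hB : 0 ≤ B) (h0 : t 0 ≤ E * B)
    (hk : ∀ k, 1 ≤ k → ∑ α ∈ Finset.Nat.antidiagonalTuple n k, t α ≤ lam * B) :
    ∑' α, ((lam - E) / (2 * lam - E)) ^ (∑ j, α j) * t α ≤ lam * B := by
  set d := (lam - E) / (2 * lam - E)
  have hden : 0 < 2 * lam - E := by linarith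
  have hd0 : 0 ≤ d := div_nonneg (by linarith) hden.le
  have hd1 : d < 1 := by rw [div_lt_one hden]; linarith
  set τ : ℕ → ℝ := fun k => ∑ α ∈ Finset.Nat.antidiagonalTuple n k, t α
  have hτ0 : τ 0 = t 0 := by simp [τ, Finset.Nat.antidiagonalTuple_zero_right]
  have hτ : ∀ k, 0 ≤ τ k ∧ τ k ≤ lam * B := by
    rintro (_ | k)
    · exact ⟨hτ0 ▸ ht 0, hτ0 ▸ h0.trans (by gcongr)⟩
    · exact ⟨sum_nonneg fun α _ => ht α, hk _ (Nat.succ_pos k)⟩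
  have hgeom := summable_geometric_of_lt_one hd0 hd1
  have hsum : Summable fun k => d ^ k * τ k :=
    Summable.of_nonneg_of_le (fun k => mul_nonneg (pow_nonneg hd0 k) (hτ k).1)
      (fun k => by rw [mul_comm]; gcongr; exact (hτ k).2) (hgeom.mul_left (lam * B))
  have hregroup : HasSum (fun α : Fin n → ℕ => d ^ (∑ j, α j) * t α) (∑' k, d ^ k * τ k) := by
    refine hasSum_of_hasSum_sum_antidiagonalTuple (fun α => mul_nonneg (pow_nonneg hd0 _) (ht α)) ?_
    convert hsum.hasSum using 2 with k
    rw [mul_sum]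
    exact sum_congr rfl fun α hα => by rw [Finset.Nat.mem_antidiagonalTuple.mp hα]
  rw [hregroup.tsum_eq, hsum.tsum_eq_zero_add]
  calc d ^ 0 * τ 0 + ∑' k, d ^ (k + 1) * τ (k + 1)
      ≤ E * B + ∑' k, lam * B * d ^ (k + 1) := by
        refine add_le_add (by rw [pow_zero, one_mul, hτ0]; exact h0) ?_
        exact Summable.tsum_le_tsum (fun k => by rw [mul_comm]; gcongr; exact (hτ _).2)
          (hsum.comp_injective (add_left_injective 1))
          ((hgeom.comp_injective (add_left_injective 1)).mul_left _)
    _ = (E + lam * ∑' k, d ^ (k + 1)) * B := by rw [tsum_mul_left]; ring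
    _ = lam * B := by rw [add_mul_tsum_geometric_succ hE hElam]

theorem prod_rpow_one_div_mul_pow_rpow {n : ℕ} {c p : ℝ} (hc : 0 ≤ c) (hp : p ≠ 0) {r : Fin n → ℝ}
    (hr : ∀ i, 0 ≤ r i) (α : Fin n → ℕ) :
    (∏ j, (c ^ (1 / p) * r j) ^ α j) ^ p = c ^ (∑ j, α j) * (∏ j, r j ^ α j) ^ p := by
  rw [prod_congr rfl fun j _ => mul_pow _ _ _, prod_mul_distrib, prod_pow_eq_pow_sum,
    Real.mul_rpow (by positivity) (prod_nonneg fun j _ => pow_nonneg (hr j) _),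
    ← Real.rpow_natCast, ← Real.rpow_mul (by positivity), ← Real.rpow_mul hc,
    mul_comm (1 / p), mul_assoc, mul_one_div_cancel hp, mul_one, Real.rpow_natCast]

/-- The core estimate in the proof of Proposition 3.1(a): if `r ∈ ℝ_{≥0}^n` satisfies
`∑_{|α|=m} ‖T x_α‖^p r^{pα} ≤ λ sup_{B_{ℓ_q^n}} ‖Q‖^p` for every `m ≥ 1` and every
`X`-valued `m`-homogeneous polynomial `Q = ∑_{|α|=m} x_α z^α`, then with
`c = ((λ - ‖T‖^p)/(2λ - ‖T‖^p))^{1/p}` one has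
`∑_α ‖T x_α‖^p (c r)^{pα} ≤ λ sup_{B_{ℓ_q^n}} ‖f‖^p` for every bounded holomorphic
`f = ∑ x_α z^α : B_{ℓ_q^n} → X`. -/
theorem stmt9 {X Y : Type*} [NormedAddCommGroup X] [NormedSpace ℂ X]
    [NormedAddCommGroup Y] [NormedSpace ℂ Y]
    (p q lam : ℝ) (hp : 1 ≤ p) (hq : 1 ≤ q) (hlam : 1 ≤ lam)
    (n : ℕ) (T : X →L[ℂ] Y) (hT : ‖T‖ < lam ^ (1 / p))
    (r : Fin n → ℝ) (hr : ∀ i, 0 ≤ r i)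
    (hhom : ∀ m : ℕ, 1 ≤ m → ∀ a : (Fin n → ℕ) → X, (∀ α, (∑ j, α j) ≠ m → a α = 0) →
      ∑' α : Fin n → ℕ, ‖T (a α)‖ ^ p * (∏ j, r j ^ α j) ^ p ≤ lam * supnorm q n a ^ p)
    (a : (Fin n → ℕ) → X) (ha : IsHinf q n a) :
    ∑' α : Fin n → ℕ, ‖T (a α)‖ ^ p *
        (∏ j, (((lam - ‖T‖ ^ p) / (2 * lam - ‖T‖ ^ p)) ^ (1 / p) * r j) ^ α j) ^ p
      ≤ lam * supnorm q n a ^ p := by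
  have hp0 : 0 < p := by linarith
  have hq0 : 0 < q := by linarith
  have hTp : 0 ≤ ‖T‖ ^ p := by positivity
  have hTlam : ‖T‖ ^ p < lam :=
    (Real.lt_rpow_inv_iff_of_pos (norm_nonneg T) (by linarith) hp0).mp (by rwa [← one_div])
  have hd : 0 ≤ (lam - ‖T‖ ^ p) / (2 * lam - ‖T‖ ^ p) := div_nonneg (by linarith) (by linarith)
  simp_rw [prod_rpow_one_div_mul_pow_rpow hd hp0.ne' hr, mul_left_comm (‖T _‖ ^ p)]
  have hweight : ∀ α : Fin n → ℕ, 0 ≤ (∏ j, r j ^ α j) ^ p := fun α =>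
    Real.rpow_nonneg (prod_nonneg fun j _ => pow_nonneg (hr j) _) _
  refine tsum_pow_mul_le_of_sum_antidiagonalTuple_le
    (fun α => mul_nonneg (by positivity) (hweight α)) hTp hTlam
    (by have := supnorm_nonneg (q := q) a; positivity) ?_ fun k hk => ?_
  · calc ‖T (a 0)‖ ^ p * (∏ j, r j ^ (0 : Fin n → ℕ) j) ^ p
        ≤ (‖T‖ * supnorm q n a) ^ p := by
          simpa using Real.rpow_le_rpow (norm_nonneg _)
            (T.le_opNorm_of_le (norm_apply_zero_le_supnorm hq0 ha)) hp0.le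
      _ = ‖T‖ ^ p * supnorm q n a ^ p := Real.mul_rpow (norm_nonneg T) (supnorm_nonneg a)
  · rw [← tsum_homogeneousPart_eq (fun α x => ‖T x‖ ^ p * (∏ j, r j ^ α j) ^ p)
      (fun α => by simp [hp0.ne'])]
    refine (hhom k hk (homogeneousPart k a) fun α hα => if_neg hα).trans ?_
    have := supnorm_nonneg (q := q) (homogeneousPart k a)
    gcongr
    exact supnorm_homogeneousPart_le hq0 ha k

end
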